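/- arXiv:1711.00246 — 3 statements merged into one kernel-verified Lean document; each statement's English description precedes it below -/
import Mathlib

section
/- For all integers 0 ≤ s ≤ n, the increments of the state satisfy ‖Y_{n+1} − Y_n‖ ≤ r·e^{−δ(n−s)}·‖Y_{s+1} − Y_s‖ + (r/(1−e^{−δ}))·‖D‖·max_{s≤g≤n−1} |v_{g+1} − v_g| (where the maximum over the empty range is taken to be 0). -/
/-!
Differencing the recursion shows that the increments `ΔY_k = Y_{k+1} - Y_k` obey the same
recursion, driven by the increments of `v`. Unrolling it from `s` (variation of constants) writes
`ΔY_n` as `C^{n-s} ΔY_s` plus a sum of `C^j D` weighted by increments of `v`; the exponential decay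
of `‖C^j‖` then bounds that sum by a geometric series.
-/

open Finset

section

variable {𝕜 E : Type*} [NontriviallyNormedField 𝕜] [NormedAddCommGroup E] [NormedSpace 𝕜 E]
  {C : E →L[𝕜] E} {D : E} {w : ℕ → 𝕜} {Z : ℕ → E}

lemma sub_succ_eq_of_forall_succ_eq {v : ℕ → 𝕜} {Y : ℕ → E}
    (hY : ∀ k, Y (k + 1) = C (Y k) + v k • D) (k : ℕ) :
    Y (k + 1 + 1) - Y (k + 1) = C (Y (k + 1) - Y k) + (v (k + 1) - v k) • D := by
  rw [hY (k + 1), hY k, map_sub, sub_smul]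
  abel

lemma eq_pow_apply_add_sum_of_forall_succ_eq (hZ : ∀ k, Z (k + 1) = C (Z k) + w k • D)
    (s m : ℕ) :
    Z (s + m) = (C ^ m) (Z s) + ∑ g ∈ range m, w (s + g) • (C ^ (m - 1 - g)) D := by
  induction m with
  | zero => simp
  | succ m ih =>
    have hterm : ∀ g ∈ range m, C (w (s + g) • (C ^ (m - 1 - g)) D)
        = w (s + g) • (C ^ (m + 1 - 1 - g)) D := fun g hg => by
      rw [map_smul, show m + 1 - 1 - g = (m - 1 - g) + 1 by have := mem_range.mp hg; omega,
        pow_succ', mul_apply_eq_comp]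
    rw [← add_assoc, hZ, ih, map_add, map_sum, sum_congr rfl hterm, sum_range_succ,
      Nat.add_sub_cancel, Nat.sub_self, pow_zero, pow_succ', mul_apply_eq_comp,
      one_apply_eq_self]
    abel

lemma norm_le_of_forall_succ_eq {r x M : ℝ} (hZ : ∀ k, Z (k + 1) = C (Z k) + w k • D)
    (hC : ∀ j : ℕ, ‖C ^ j‖ ≤ r * x ^ j) (hx₀ : 0 ≤ x) (hx₁ : x < 1) {s m : ℕ}
    (hw : ∀ g < m, ‖w (s + g)‖ ≤ M) (hM : 0 ≤ M) :
    ‖Z (s + m)‖ ≤ r * x ^ m * ‖Z s‖ + r / (1 - x) * ‖D‖ * M := by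
  have hr : 0 ≤ r := by simpa using (norm_nonneg _).trans (hC 0)
  have hgeom : ∑ g ∈ range m, x ^ (m - 1 - g) ≤ 1 / (1 - x) := by
    rw [sum_range_reflect (x ^ ·) m, range_eq_Ico, ← pow_zero x]
    exact geom_sum_Ico_le_of_lt_one hx₀ hx₁
  rw [eq_pow_apply_add_sum_of_forall_succ_eq hZ]
  calc _ ≤ ‖(C ^ m) (Z s)‖ + ∑ g ∈ range m, ‖w (s + g)‖ * ‖(C ^ (m - 1 - g)) D‖ := by
        refine (norm_add_le _ _).trans (add_le_add_right ((norm_sum_le _ _).trans_eq ?_) _)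
        simp only [norm_smul]
    _ ≤ r * x ^ m * ‖Z s‖ + ∑ g ∈ range m, M * (r * x ^ (m - 1 - g) * ‖D‖) := by
        gcongr with g hg
        · exact ContinuousLinearMap.le_of_opNorm_le _ (hC m) _
        · exact hw g (mem_range.mp hg)
        · exact ContinuousLinearMap.le_of_opNorm_le _ (hC _) _
    _ = r * x ^ m * ‖Z s‖ + M * r * ‖D‖ * ∑ g ∈ range m, x ^ (m - 1 - g) := by
        rw [mul_sum]
        congr 1
        exact sum_congr rfl fun g _ => by ring
    _ ≤ r * x ^ m * ‖Z s‖ + M * r * ‖D‖ * (1 / (1 - x)) := by gcongr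
    _ = r * x ^ m * ‖Z s‖ + r / (1 - x) * ‖D‖ * M := by ring

end

lemma Finset.le_ciSup_of_mem {ι α : Type*} [ConditionallyCompleteLattice α] {f : ι → α}
    {S : Finset ι} {i : ι} (hi : i ∈ S) : f i ≤ ⨆ j ∈ S, f j :=
  le_ciSup₂ (f := fun j (_ : j ∈ S) => f j) ((S.finite_toSet.image f).bddAbove.mono <| by
    simp only [Set.iUnion_subset_iff, Set.range_subset_iff]
    exact fun j hj => Set.mem_image_of_mem f hj) i hi

theorem state_increment_bound_general {d : ℕ}
    (C : EuclideanSpace ℝ (Fin d) →L[ℝ] EuclideanSpace ℝ (Fin d))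
    (D : EuclideanSpace ℝ (Fin d)) (r δ : ℝ) (hδ : 0 < δ)
    (hC : ∀ j : ℕ, ‖C ^ j‖ ≤ r * Real.exp (-δ * j))
    (v : ℕ → ℝ) (Y : ℕ → EuclideanSpace ℝ (Fin d))
    (hY : ∀ k : ℕ, Y (k + 1) = C (Y k) + v k • D)
    (n s : ℕ) (hs : s ≤ n) :
    ‖Y (n + 1) - Y n‖ ≤ r * Real.exp (-δ * ((n : ℝ) - s)) * ‖Y (s + 1) - Y s‖ +
      r / (1 - Real.exp (-δ)) * ‖D‖ * ⨆ g ∈ Finset.Icc s (n - 1), |v (g + 1) - v g| := by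
  obtain ⟨m, rfl⟩ := Nat.exists_eq_add_of_le hs
  set M := ⨆ g ∈ Finset.Icc s (s + m - 1), |v (g + 1) - v g|
  have hpow (j : ℕ) : Real.exp (-δ * j) = Real.exp (-δ) ^ j := by
    rw [mul_comm, Real.exp_nat_mul]
  have hv (g : ℕ) (hg : g < m) : |v (s + g + 1) - v (s + g)| ≤ M :=
    Finset.le_ciSup_of_mem (f := fun g => |v (g + 1) - v g|) (mem_Icc.mpr ⟨by omega, by omega⟩)
  have hM : 0 ≤ M := Real.iSup_nonneg fun _ => Real.iSup_nonneg fun _ => abs_nonneg _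
  have hbound := norm_le_of_forall_succ_eq (Z := fun k => Y (k + 1) - Y k)
    (sub_succ_eq_of_forall_succ_eq hY) (fun j => hpow j ▸ hC j) (Real.exp_pos _).le
    (Real.exp_lt_one_iff.mpr (neg_neg_of_pos hδ)) hv hM
  rwa [← Nat.cast_sub (Nat.le_add_right s m), Nat.add_sub_cancel_left, hpow]

/-- Increment estimate for a stable linear block: for `0 ≤ s ≤ n`,
`‖Y_{n+1} − Y_n‖ ≤ r e^{−δ(n−s)} ‖Y_{s+1} − Y_s‖
  + (r/(1−e^{−δ})) ‖D‖ · max_{s ≤ g ≤ n−1} |v_{g+1} − v_g|`. -/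
theorem state_increment_bound {d : ℕ} (hd : 0 < d)
    (C : EuclideanSpace ℝ (Fin d) →L[ℝ] EuclideanSpace ℝ (Fin d))
    (D : EuclideanSpace ℝ (Fin d)) (r δ : ℝ) (hr : 0 < r) (hδ : 0 < δ)
    (hC : ∀ j : ℕ, ‖C ^ j‖ ≤ r * Real.exp (-δ * j))
    (v : ℕ → ℝ) (Y : ℕ → EuclideanSpace ℝ (Fin d))
    (hY : ∀ k : ℕ, Y (k + 1) = C (Y k) + v k • D)
    (n s : ℕ) (hn : 0 < n) (hs : s ≤ n) :
    ‖Y (n + 1) - Y n‖ ≤ r * Real.exp (-δ * ((n : ℝ) - s)) * ‖Y (s + 1) - Y s‖ +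
      r / (1 - Real.exp (-δ)) * ‖D‖ * ⨆ g ∈ Finset.Icc s (n - 1), |v (g + 1) - v g| :=
  state_increment_bound_general C D r δ hδ hC v Y hY n s hs
end

section
/- If the input sequence converges, v_k → v as k → ∞, then I − C is invertible and the state converges: Y_k → (I − C)^{−1}(v·D) as k → ∞. -/
/-!
Variation of constants gives `Y k = C ^ k (Y 0) + ∑_{j < k} C ^ j (v (k - 1 - j) • D)`.
The exponential bound makes `∑ ‖C ^ j‖` summable, so the Neumann series `∑ C ^ j` converges
to `(1 - C)⁻¹`, the free term `C ^ k (Y 0)` dies out, and by Tannery's theorem (dominated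
convergence for series, with the bounded input as dominating factor) the convolution sum tends
to `∑ C ^ j (vlim • D) = (1 - C)⁻¹ (vlim • D)`.
-/

open Filter Finset Topology

section GeometricSeries

variable {R : Type*} [Ring R] [TopologicalSpace R] [IsTopologicalRing R] [T2Space R] {a : R}

noncomputable def Summable.unitOneSub (h : Summable (a ^ ·)) : Rˣ :=
  ⟨1 - a, ∑' i, a ^ i, h.one_sub_mul_tsum_pow, h.tsum_pow_mul_one_sub⟩

theorem Summable.isUnit_one_sub (h : Summable (a ^ ·)) : IsUnit (1 - a) :=
  ⟨h.unitOneSub, rfl⟩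

theorem Summable.tsum_pow_eq_inverse_one_sub (h : Summable (a ^ ·)) :
    ∑' i, a ^ i = Ring.inverse (1 - a) :=
  (Ring.inverse_unit h.unitOneSub).symm

end GeometricSeries

theorem summable_norm_pow_of_le_exp {R : Type*} [SeminormedRing R] {a : R} {r δ : ℝ}
    (hδ : 0 < δ) (ha : ∀ j : ℕ, ‖a ^ j‖ ≤ r * Real.exp (-δ * j)) :
    Summable (‖a ^ ·‖) := by
  have hq : Summable fun j : ℕ => r * Real.exp (-δ) ^ j :=
    (summable_geometric_of_lt_one (Real.exp_pos _).le
      (Real.exp_lt_one_iff.2 (by linarith))).mul_left r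
  refine hq.of_nonneg_of_le (fun _ => norm_nonneg _) fun j => ?_
  rw [← Real.exp_nat_mul, mul_comm (j : ℝ)]
  exact ha j

section AffineRecursion

variable {𝕜 X : Type*} [NontriviallyNormedField 𝕜] [NormedAddCommGroup X] [NormedSpace 𝕜 X]
  {C : X →L[𝕜] X} {u Y : ℕ → X}

theorem eq_pow_apply_add_sum_of_recursion (hY : ∀ k, Y (k + 1) = C (Y k) + u k) (k : ℕ) :
    Y k = (C ^ k) (Y 0) + ∑ j ∈ range k, (C ^ j) (u (k - 1 - j)) := by
  induction k with
  | zero => simp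
  | succ k ih =>
    have hshift : ∀ j ∈ range k,
        (C ^ (j + 1)) (u (k + 1 - 1 - (j + 1))) = C ((C ^ j) (u (k - 1 - j))) := by
      intro j _
      rw [pow_succ', mul_apply_eq_comp]
      congr 3
      omega
    rw [hY, ih, map_add, map_sum, sum_range_succ', sum_congr rfl hshift, pow_succ',
      mul_apply_eq_comp, pow_zero, one_apply_eq_self, Nat.sub_zero, Nat.add_sub_cancel, add_assoc]

variable [CompleteSpace X]

theorem tendsto_sum_range_pow_apply (hC : Summable (‖C ^ ·‖)) {w : X}
    (hu : Tendsto u atTop (𝓝 w)) :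
    Tendsto (fun k => ∑ j ∈ range k, (C ^ j) (u (k - 1 - j))) atTop
      (𝓝 (∑' j, (C ^ j) w)) := by
  obtain ⟨M, hM⟩ := isBounded_iff_forall_norm_le.1 (Metric.isBounded_range_of_tendsto u hu)
  set F : ℕ → ℕ → X := fun k j => if j < k then (C ^ j) (u (k - 1 - j)) else 0
  have hF : ∀ k, ∑' j, F k j = ∑ j ∈ range k, (C ^ j) (u (k - 1 - j)) := fun k => by
    rw [tsum_eq_sum (s := range k) fun j hj => if_neg (by simpa using hj)]
    exact sum_congr rfl fun j hj => if_pos (mem_range.1 hj)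
  simp only [← hF]
  refine tendsto_tsum_of_dominated_convergence (hC.mul_right M) (fun j => ?_)
    (.of_forall fun k j => ?_)
  · have hshift : Tendsto (fun k => k - 1 - j) atTop atTop :=
      (tendsto_sub_atTop_nat j).comp (tendsto_sub_atTop_nat 1)
    refine (((C ^ j).continuous.tendsto w).comp (hu.comp hshift)).congr' ?_
    filter_upwards [eventually_gt_atTop j] with k hk
    exact (if_pos hk).symm
  · by_cases hjk : j < k
    · simp only [F, if_pos hjk]
      exact (C ^ j).le_opNorm_of_le (hM _ ⟨_, rfl⟩)
    · simp only [F, if_neg hjk, norm_zero]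
      exact mul_nonneg (norm_nonneg _) ((norm_nonneg _).trans (hM _ ⟨0, rfl⟩))

theorem tendsto_inverse_one_sub_apply_of_recursion (hC : Summable (‖C ^ ·‖)) {w : X}
    (hu : Tendsto u atTop (𝓝 w)) (hY : ∀ k, Y (k + 1) = C (Y k) + u k) :
    Tendsto Y atTop (𝓝 (Ring.inverse (1 - C) w)) := by
  have hsum : Summable (C ^ ·) := hC.of_norm
  have hfree : Tendsto (fun k => (C ^ k) (Y 0)) atTop (𝓝 0) := by
    have := ((ContinuousLinearMap.apply 𝕜 X (Y 0)).continuous.tendsto 0).comp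
      hsum.tendsto_atTop_zero
    rwa [map_zero] at this
  have hlim : ∑' j, (C ^ j) w = Ring.inverse (1 - C) w := by
    rw [← hsum.tsum_pow_eq_inverse_one_sub]
    exact ((ContinuousLinearMap.apply 𝕜 X w).map_tsum hsum).symm
  rw [funext (eq_pow_apply_add_sum_of_recursion hY), ← zero_add (Ring.inverse (1 - C) w),
    ← hlim]
  exact hfree.add (tendsto_sum_range_pow_apply hC hu)

end AffineRecursion

theorem state_space_steady_state_general {n : ℕ}
    (C : EuclideanSpace ℝ (Fin n) →L[ℝ] EuclideanSpace ℝ (Fin n))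
    (D : EuclideanSpace ℝ (Fin n)) (r δ : ℝ) (hδ : 0 < δ)
    (hC : ∀ j : ℕ, ‖C ^ j‖ ≤ r * Real.exp (-δ * j))
    (v : ℕ → ℝ) (Y : ℕ → EuclideanSpace ℝ (Fin n))
    (hY : ∀ k : ℕ, Y (k + 1) = C (Y k) + v k • D)
    (vlim : ℝ) (hv : Filter.Tendsto v Filter.atTop (nhds vlim)) :
    IsUnit (1 - C) ∧
      Filter.Tendsto Y Filter.atTop (nhds (Ring.inverse (1 - C) (vlim • D))) := by
  have hsum := summable_norm_pow_of_le_exp hδ hC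
  exact ⟨hsum.of_norm.isUnit_one_sub,
    tendsto_inverse_one_sub_apply_of_recursion hsum (hv.smul_const D) hY⟩

/-- Steady-state convergence for a stable linear block: if `‖C^j‖ ≤ r e^{−δ j}`,
`Y_{k+1} = C Y_k + v_k • D` and `v_k → v`, then `I − C` is invertible and
`Y_k → (I − C)⁻¹ (v • D)`. -/
theorem state_space_steady_state {n : ℕ} (hn : 0 < n)
    (C : EuclideanSpace ℝ (Fin n) →L[ℝ] EuclideanSpace ℝ (Fin n))
    (D : EuclideanSpace ℝ (Fin n)) (r δ : ℝ) (hr : 0 < r) (hδ : 0 < δ)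
    (hC : ∀ j : ℕ, ‖C ^ j‖ ≤ r * Real.exp (-δ * j))
    (v : ℕ → ℝ) (Y : ℕ → EuclideanSpace ℝ (Fin n))
    (hY : ∀ k : ℕ, Y (k + 1) = C (Y k) + v k • D)
    (vlim : ℝ) (hv : Filter.Tendsto v Filter.atTop (nhds vlim)) :
    IsUnit (1 - C) ∧
      Filter.Tendsto Y Filter.atTop (nhds (Ring.inverse (1 - C) (vlim • D))) :=
  state_space_steady_state_general C D r δ hδ hC v Y hY vlim hv
end

section
/- Let N be a positive integer, let h_1, …, h_N : ℝ → ℝ be continuous, strictly increasing functions each with range all of ℝ, let α_1, …, α_N be positive reals and c ∈ ℝ. Then there exists a unique vector (u_1, …, u_N) ∈ ℝ^N such that h_1(u_1) = h_2(u_2) = ⋯ = h_N(u_N) and α_1 u_1 + ⋯ + α_N u_N = c. In particular (taking all α_i = 1), the set J = { u ∈ ℝ^N : h_1(u_1) = ⋯ = h_N(u_N) } intersects each hyperplane { u : u_1 + ⋯ + u_N = c } in exactly one point. -/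
/-!
Each `h i` is an order isomorphism of `ℝ`; with `g i` its inverse, the solutions of
`h 1 (u 1) = ⋯ = h N (u N)` are exactly the vectors `(g i t)ᵢ`, `t ∈ ℝ`. The weighted sum
`t ↦ ∑ α i * g i t` is strictly increasing, continuous (order isomorphisms of `ℝ` are) and tends
to `±∞`, hence a bijection of `ℝ`, and exactly one `t` gives the value `c`.
-/

open Filter

namespace Filter

variable {ι α M : Type*} [AddCommMonoid M] [Preorder M] [IsOrderedAddMonoid M] {l : Filter α}
  {f : ι → α → M} {s : Finset ι}

theorem Tendsto.finsetSum_atTop (hs : s.Nonempty) (hf : ∀ i ∈ s, Tendsto (f i) l atTop) :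
    Tendsto (fun x => ∑ i ∈ s, f i x) l atTop := by
  induction hs using Finset.Nonempty.cons_induction with
  | singleton i => simpa using hf i (Finset.mem_singleton_self i)
  | cons i s _ _ ih =>
    simp only [Finset.sum_cons]
    simp only [Finset.mem_cons, forall_eq_or_imp] at hf
    exact hf.1.atTop_add_atTop (ih hf.2)

theorem Tendsto.finsetSum_atBot (hs : s.Nonempty) (hf : ∀ i ∈ s, Tendsto (f i) l atBot) :
    Tendsto (fun x => ∑ i ∈ s, f i x) l atBot :=
  Tendsto.finsetSum_atTop (M := Mᵒᵈ) hs hf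

end Filter

theorem existsUnique_sum_mul_orderIso_eq {ι : Type*} [Fintype ι] [Nonempty ι]
    (g : ι → ℝ ≃o ℝ) {α : ι → ℝ} (hα : ∀ i, 0 < α i) (c : ℝ) :
    ∃! t, ∑ i, α i * g i t = c := by
  have hmono : StrictMono fun t => ∑ i, α i * g i t := fun a b hab =>
    Finset.sum_lt_sum_of_nonempty Finset.univ_nonempty fun i _ =>
      mul_lt_mul_of_pos_left ((g i).strictMono hab) (hα i)
  have hcont : Continuous fun t => ∑ i, α i * g i t := by fun_prop
  have htop := Tendsto.finsetSum_atTop Finset.univ_nonempty fun i _ =>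
    ((g i).tendsto_atTop).const_mul_atTop (hα i)
  have hbot := Tendsto.finsetSum_atBot Finset.univ_nonempty fun i _ =>
    ((g i).tendsto_atBot).const_mul_atBot (hα i)
  exact Function.Bijective.existsUnique ⟨hmono.injective, hcont.surjective htop hbot⟩ c

theorem Equiv.forall_apply_eq_apply_iff_exists_eq_symm {ι α β : Type*} [Nonempty ι]
    (e : ι → α ≃ β) (u : ι → α) :
    (∀ i j, e i (u i) = e j (u j)) ↔ ∃ t, u = fun i => (e i).symm t := by
  constructor
  · intro hu
    obtain ⟨i₀⟩ := ‹Nonempty ι›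
    exact ⟨e i₀ (u i₀), funext fun i => by rw [hu i₀ i, Equiv.symm_apply_apply]⟩
  · rintro ⟨t, rfl⟩ i j
    simp

theorem single_root_general (N : ℕ) (hN : 0 < N) (h : Fin N → ℝ → ℝ)
    (hmono : ∀ i, StrictMono (h i))
    (hsurj : ∀ i, Function.Surjective (h i))
    (α : Fin N → ℝ) (hα : ∀ i, 0 < α i) (c : ℝ) :
    ∃! u : Fin N → ℝ,
      (∀ i j : Fin N, h i (u i) = h j (u j)) ∧ ∑ i, α i * u i = c := by
  have : Nonempty (Fin N) := Fin.pos_iff_nonempty.mp hN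
  let e i := (hmono i).orderIsoOfSurjective (h i) (hsurj i)
  have hJ (u : Fin N → ℝ) :
      (∀ i j, h i (u i) = h j (u j)) ↔ ∃ t, u = fun i => (e i).symm t :=
    Equiv.forall_apply_eq_apply_iff_exists_eq_symm (fun i => (e i).toEquiv) u
  obtain ⟨t, ht, huniq⟩ := existsUnique_sum_mul_orderIso_eq (fun i => (e i).symm) hα c
  refine ⟨fun i => (e i).symm t, ⟨(hJ _).2 ⟨t, rfl⟩, ht⟩, ?_⟩
  rintro u ⟨hu, hsum⟩
  obtain ⟨s, rfl⟩ := (hJ u).1 hu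
  rw [huniq s hsum]

/-- Lemma 3 (SingleRoot): if each `h i : ℝ → ℝ` is continuous, strictly increasing
and surjective, `α i > 0` and `c ∈ ℝ`, then there is a unique `u ∈ ℝ^N` with
`h 1 (u 1) = ⋯ = h N (u N)` and `∑ i, α i * u i = c`. -/
theorem single_root (N : ℕ) (hN : 0 < N) (h : Fin N → ℝ → ℝ)
    (hcont : ∀ i, Continuous (h i)) (hmono : ∀ i, StrictMono (h i))
    (hsurj : ∀ i, Function.Surjective (h i))
    (α : Fin N → ℝ) (hα : ∀ i, 0 < α i) (c : ℝ) :
    ∃! u : Fin N → ℝ,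
      (∀ i j : Fin N, h i (u i) = h j (u j)) ∧ ∑ i, α i * u i = c :=
  single_root_general N hN h hmono hsurj α hα c
end
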